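/- Let n ≥ 1 be an integer, m ∈ (0,1) with m > (n−2)/n, and B > 0. Then the Barenblatt solution ρ_B satisfies the fast diffusion equation: for every τ with 1+2pτ > 0 and every y ∈ ℝⁿ, ∂_τ ρ_B(τ,y) = (1/m)·Δ_y(ρ_B(τ,y)ᵐ). -/

import Mathlib

open MeasureTheory Filter
open scoped BigOperators ENNReal Topology

noncomputable section

/-- The `i`-th standard basis vector of `ℝⁿ`. -/
def stdBasis (n : ℕ) (i : Fin n) : EuclideanSpace ℝ (Fin n) :=
  EuclideanSpace.single i 1

/-- The Laplacian (sum of second partial derivatives) of `f : ℝⁿ → ℝ`. -/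
def lap (n : ℕ) (f : EuclideanSpace ℝ (Fin n) → ℝ) (x : EuclideanSpace ℝ (Fin n)) : ℝ :=
  ∑ i : Fin n, fderiv ℝ (fun y => fderiv ℝ f y (stdBasis n i)) x (stdBasis n i)

/-- `x · ∇f x`. -/
def gradDot (n : ℕ) (f : EuclideanSpace ℝ (Fin n) → ℝ) (x : EuclideanSpace ℝ (Fin n)) : ℝ :=
  ∑ i : Fin n, x i * fderiv ℝ f x (stdBasis n i)

/-- The moment parameter `p = 2/(1-m) - n`. -/
def pPar (n : ℕ) (m : ℝ) : ℝ := 2 / (1 - m) - n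

/-- The scaling exponent `β = (1 + n/p)/2`. -/
def betaPar (n : ℕ) (m : ℝ) : ℝ := (1 + n / pPar n m) / 2

/-- The Barenblatt profile `u_B(x) = (B + |x|²)^{-1/(1-m)}`. -/
def uB (n : ℕ) (m B : ℝ) (x : EuclideanSpace ℝ (Fin n)) : ℝ :=
  (B + ‖x‖ ^ 2) ^ (-(1 / (1 - m)))

/-- The Barenblatt solution `ρ_B(τ,y) = (1+2pτ)^{-nβ} u_B((1+2pτ)^{-β} y)`. -/
def rhoB (n : ℕ) (m B : ℝ) (τ : ℝ) (y : EuclideanSpace ℝ (Fin n)) : ℝ :=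
  (1 + 2 * pPar n m * τ) ^ (-(n : ℝ) * betaPar n m) *
    uB n m B ((1 + 2 * pPar n m * τ) ^ (-betaPar n m) • y)

/-- A (positive, continuous up to time 0, smooth for positive times) solution of the
fast diffusion equation `∂_τ ρ = (1/m) Δ (ρ^m)` on `[0,∞) × ℝⁿ`. -/
def IsFDESol (n : ℕ) (m : ℝ) (ρ : ℝ → EuclideanSpace ℝ (Fin n) → ℝ) : Prop :=
  (∀ τ ∈ Set.Ici (0 : ℝ), ∀ y, 0 < ρ τ y) ∧
  ContinuousOn (fun q : ℝ × EuclideanSpace ℝ (Fin n) => ρ q.1 q.2)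
    (Set.Ici 0 ×ˢ Set.univ) ∧
  ContDiffOn ℝ (⊤ : ℕ∞) (fun q : ℝ × EuclideanSpace ℝ (Fin n) => ρ q.1 q.2)
    (Set.Ioi 0 ×ˢ Set.univ) ∧
  ∀ τ ∈ Set.Ioi (0 : ℝ), ∀ y,
    deriv (fun s => ρ s y) τ = (1 / m) * lap n (fun x => ρ τ x ^ m) y

/-! With `s = 1 + 2pτ`, `ρ_B(τ, y) = s^(-nβ) (B + s^(-2β) |y|²)^(-1/(1-m))`, and `ρ_B^m` is again a
constant times a power of `B + K |x|²`. A radial function `φ(|x|²)` has Laplacian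
`4 |y|² φ'' + 2n φ'`, so both sides of the equation are explicit. They agree because `p` and `β`
are chosen so that `pβ = 1/(1-m)` and `nβ(1-m) = 2β - 1`. -/

section Laplacian

variable {n : ℕ}

lemma lap_comp_norm_sq {φ φ' : ℝ → ℝ} {φ'' : ℝ} {y : EuclideanSpace ℝ (Fin n)}
    (hφ : ∀ t, 0 ≤ t → HasDerivAt φ (φ' t) t) (hφ' : HasDerivAt φ' φ'' (‖y‖ ^ 2)) :
    lap n (fun x => φ (‖x‖ ^ 2)) y = 4 * φ'' * ‖y‖ ^ 2 + 2 * n * φ' (‖y‖ ^ 2) := by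
  have hnorm_sq (x : EuclideanSpace ℝ (Fin n)) :
      HasFDerivAt (fun x => ‖x‖ ^ 2) (2 • innerSL ℝ x) x :=
    (hasStrictFDerivAt_norm_sq x).hasFDerivAt
  have hgrad (i : Fin n) : (fun x => fderiv ℝ (fun x => φ (‖x‖ ^ 2)) x (stdBasis n i)) =
      fun x => 2 * (φ' (‖x‖ ^ 2) * x i) := by
    funext x
    rw [HasFDerivAt.fderiv (f := fun x => φ (‖x‖ ^ 2))
      ((hφ _ (sq_nonneg _)).comp_hasFDerivAt x (hnorm_sq x))]
    simp [stdBasis, EuclideanSpace.inner_single_right]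
    ring
  have hsecond (i : Fin n) :
      fderiv ℝ (fun x => 2 * (φ' (‖x‖ ^ 2) * x i)) y (stdBasis n i) =
        4 * φ'' * y i ^ 2 + 2 * φ' (‖y‖ ^ 2) := by
    have hcoord : HasFDerivAt (fun x : EuclideanSpace ℝ (Fin n) => x i)
        (EuclideanSpace.proj i : EuclideanSpace ℝ (Fin n) →L[ℝ] ℝ) y :=
      PiLp.hasFDerivAt_apply 2 y i
    rw [HasFDerivAt.fderiv (f := fun x : EuclideanSpace ℝ (Fin n) => 2 * (φ' (‖x‖ ^ 2) * x i))
      (((hφ'.comp_hasFDerivAt y (hnorm_sq y)).mul hcoord).const_mul 2)]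
    simp [stdBasis, EuclideanSpace.inner_single_right]
    ring
  rw [lap]
  simp only [hgrad, hsecond]
  rw [Finset.sum_add_distrib, ← Finset.mul_sum, ← EuclideanSpace.real_norm_sq_eq, Finset.sum_const,
    Finset.card_univ, Fintype.card_fin, nsmul_eq_mul]
  ring

lemma hasDerivAt_rpow_affine {B K a t : ℝ} (ht : 0 < B + K * t) :
    HasDerivAt (fun t => (B + K * t) ^ a) (K * a * (B + K * t) ^ (a - 1)) t := by
  simpa using (((hasDerivAt_id t).const_mul K).const_add B).rpow_const (p := a) (Or.inl ht.ne')

lemma lap_rpow_norm_sq {B K : ℝ} (hB : 0 < B) (hK : 0 ≤ K) (C a : ℝ)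
    (y : EuclideanSpace ℝ (Fin n)) :
    lap n (fun x => C * (B + K * ‖x‖ ^ 2) ^ a) y =
      2 * C * a * K * (2 * (a - 1) * K * ‖y‖ ^ 2 * (B + K * ‖y‖ ^ 2) ^ (a - 2) +
        n * (B + K * ‖y‖ ^ 2) ^ (a - 1)) := by
  have hpos {t : ℝ} (ht : 0 ≤ t) : 0 < B + K * t := by positivity
  rw [lap_comp_norm_sq (φ' := fun t => C * (K * a * (B + K * t) ^ (a - 1)))
    (fun t ht => (hasDerivAt_rpow_affine (hpos ht)).const_mul C)
    (((hasDerivAt_rpow_affine (hpos (sq_nonneg ‖y‖))).const_mul (K * a)).const_mul C)]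
  rw [show a - 1 - 1 = a - 2 by ring]
  ring

end Laplacian

section Exponents

variable {n : ℕ} {m : ℝ}

lemma pPar_pos (hm1 : m < 1) (hm : ((n : ℝ) - 2) / n < m) : 0 < pPar n m := by
  have h1m : 0 < 1 - m := by linarith
  have hnm : (n : ℝ) * (1 - m) < 2 := by
    rcases Nat.eq_zero_or_pos n with rfl | hn
    · simp
    · have hlt := (div_lt_iff₀ (Nat.cast_pos.mpr hn)).mp hm
      linarith
  rwa [pPar, sub_pos, lt_div_iff₀ h1m]

lemma pPar_add_natCast_mul (hm1 : m ≠ 1) : (pPar n m + n) * (1 - m) = 2 := by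
  rw [pPar, sub_add_cancel, div_mul_cancel₀ _ (sub_ne_zero.mpr hm1.symm)]

lemma pPar_mul_betaPar (hm1 : m ≠ 1) (hp : pPar n m ≠ 0) :
    pPar n m * betaPar n m = 1 / (1 - m) := by
  have hsum := pPar_add_natCast_mul (n := n) hm1
  rw [betaPar]
  field_simp
  linear_combination hsum

lemma natCast_mul_betaPar_mul_one_sub (hm1 : m ≠ 1) (hp : pPar n m ≠ 0) :
    n * betaPar n m * (1 - m) = 2 * betaPar n m - 1 := by
  have h1m : 1 - m ≠ 0 := sub_ne_zero.mpr hm1.symm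
  have hpβ : pPar n m * betaPar n m * (1 - m) = 1 := by
    rw [pPar_mul_betaPar hm1 hp, one_div_mul_cancel h1m]
  linear_combination betaPar n m * pPar_add_natCast_mul (n := n) hm1 - hpβ

end Exponents

section Barenblatt

variable {n : ℕ} {m B : ℝ}

lemma uB_rpow_smul {t : ℝ} (ht : 0 < t) (b : ℝ) (x : EuclideanSpace ℝ (Fin n)) :
    uB n m B (t ^ (-b) • x) = (B + t ^ (-(2 * b)) * ‖x‖ ^ 2) ^ (-(1 / (1 - m))) := by
  rw [uB, norm_smul, mul_pow, Real.norm_of_nonneg (by positivity), ← Real.rpow_natCast,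
    ← Real.rpow_mul ht.le]
  ring_nf

lemma hasDerivAt_rpow_mul_rpow {a b c B Y s : ℝ} (hs : 0 < s) (hU : 0 < B + s ^ b * Y) :
    HasDerivAt (fun t => t ^ a * (B + t ^ b * Y) ^ c)
      (a * s ^ (a - 1) * (B + s ^ b * Y) ^ c +
        s ^ a * (b * s ^ (b - 1) * Y * c * (B + s ^ b * Y) ^ (c - 1))) s :=
  (Real.hasDerivAt_rpow_const (Or.inl hs.ne')).mul
    ((((Real.hasDerivAt_rpow_const (Or.inl hs.ne')).mul_const Y).const_add B).rpow_const
      (Or.inl hU.ne'))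

lemma lap_rpow_mul_uB_smul (hm1 : m ≠ 1) (hB : 0 < B) {s : ℝ} (hs : 0 < s) (a b : ℝ)
    (y : EuclideanSpace ℝ (Fin n)) :
    lap n (fun x => (s ^ a * uB n m B (s ^ (-b) • x)) ^ m) y =
      m * (2 * -(1 / (1 - m)) * (s ^ (a * m) * s ^ (-(2 * b)) *
        (n * (B + s ^ (-(2 * b)) * ‖y‖ ^ 2) ^ (-(1 / (1 - m))) +
          2 * -(1 / (1 - m)) * s ^ (-(2 * b)) * ‖y‖ ^ 2 *
            (B + s ^ (-(2 * b)) * ‖y‖ ^ 2) ^ (-(1 / (1 - m)) - 1)))) := by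
  have hK : 0 ≤ s ^ (-(2 * b)) := by positivity
  have hfun : (fun x => (s ^ a * uB n m B (s ^ (-b) • x)) ^ m) =
      fun x => s ^ (a * m) * (B + s ^ (-(2 * b)) * ‖x‖ ^ 2) ^ (-(1 / (1 - m)) * m) := by
    funext x
    rw [uB_rpow_smul hs, Real.mul_rpow (by positivity) (by positivity), ← Real.rpow_mul hs.le,
      ← Real.rpow_mul (by positivity)]
  have hexp : -(1 / (1 - m)) * m - 1 = -(1 / (1 - m)) := by
    field_simp [sub_ne_zero.mpr hm1.symm]
    ring
  rw [hfun, lap_rpow_norm_sq hB hK, hexp, show -(1 / (1 - m)) * m - 2 = -(1 / (1 - m)) - 1 by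
    linear_combination hexp]
  ring

lemma hasDerivAt_rpow_mul_uB_smul (hm1 : m ≠ 1) (hp : pPar n m ≠ 0) (hB : 0 < B) {s : ℝ}
    (hs : 0 < s) (y : EuclideanSpace ℝ (Fin n)) :
    HasDerivAt (fun t => t ^ (-(n : ℝ) * betaPar n m) * uB n m B (t ^ (-betaPar n m) • y))
      (-betaPar n m * (s ^ (-(n : ℝ) * betaPar n m * m) * s ^ (-(2 * betaPar n m)) *
        (n * (B + s ^ (-(2 * betaPar n m)) * ‖y‖ ^ 2) ^ (-(1 / (1 - m))) +
          2 * -(1 / (1 - m)) * s ^ (-(2 * betaPar n m)) * ‖y‖ ^ 2 *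
            (B + s ^ (-(2 * betaPar n m)) * ‖y‖ ^ 2) ^ (-(1 / (1 - m)) - 1)))) s := by
  set β := betaPar n m
  have hU : 0 < B + s ^ (-(2 * β)) * ‖y‖ ^ 2 := by positivity
  have heq : (fun t => t ^ (-(n : ℝ) * β) * uB n m B (t ^ (-β) • y)) =ᶠ[𝓝 s]
      fun t => t ^ (-(n : ℝ) * β) * (B + t ^ (-(2 * β)) * ‖y‖ ^ 2) ^ (-(1 / (1 - m))) := by
    filter_upwards [eventually_gt_nhds hs] with t ht
    rw [uB_rpow_smul ht]
  have hexp := natCast_mul_betaPar_mul_one_sub hm1 hp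
  have R1 : s ^ (-(n : ℝ) * β - 1) = s ^ (-(n : ℝ) * β * m) * s ^ (-(2 * β)) := by
    rw [← Real.rpow_add hs]
    congr 1
    linear_combination -hexp
  have R2 : s ^ (-(n : ℝ) * β) * s ^ (-(2 * β) - 1) =
      s ^ (-(n : ℝ) * β * m) * s ^ (-(2 * β)) * s ^ (-(2 * β)) := by
    simp only [← Real.rpow_add hs]
    congr 1
    linear_combination -hexp
  refine ((hasDerivAt_rpow_mul_rpow hs hU).congr_of_eventuallyEq heq).congr_deriv ?_
  linear_combination (-(n : ℝ) * β * (B + s ^ (-(2 * β)) * ‖y‖ ^ 2) ^ (-(1 / (1 - m)))) * R1 +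
    (-(2 * β) * ‖y‖ ^ 2 * -(1 / (1 - m)) *
      (B + s ^ (-(2 * β)) * ‖y‖ ^ 2) ^ (-(1 / (1 - m)) - 1)) * R2

end Barenblatt

theorem statement16_general
    (n : ℕ) (m : ℝ) (hm0 : 0 < m) (hm1 : m < 1)
    (hm : ((n : ℝ) - 2) / n < m) (B : ℝ) (hB : 0 < B)
    (τ : ℝ) (hτ : 0 < 1 + 2 * pPar n m * τ) (y : EuclideanSpace ℝ (Fin n)) :
    deriv (fun s => rhoB n m B s y) τ =
      (1 / m) * lap n (fun x => rhoB n m B τ x ^ m) y := by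
  have hp := pPar_pos hm1 hm
  have htime : HasDerivAt (fun s : ℝ => 1 + 2 * pPar n m * s) (2 * pPar n m) τ := by
    simpa using ((hasDerivAt_id τ).const_mul (2 * pPar n m)).const_add 1
  have hρ := (hasDerivAt_rpow_mul_uB_smul hm1.ne hp.ne' hB hτ y).comp τ htime
  rw [HasDerivAt.deriv (f := fun s => rhoB n m B s y) hρ]
  unfold rhoB
  rw [lap_rpow_mul_uB_smul hm1.ne hB hτ, one_div_mul_eq_div, mul_div_cancel_left₀ _ hm0.ne',
    ← pPar_mul_betaPar hm1.ne hp.ne']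
  ring

/-- **The Barenblatt solution solves the fast diffusion equation**:
for all `τ` with `1 + 2pτ > 0` and all `y`, `∂_τ ρ_B = (1/m) Δ (ρ_B^m)`. -/
theorem statement16
    (n : ℕ) (hn : 1 ≤ n) (m : ℝ) (hm0 : 0 < m) (hm1 : m < 1)
    (hm : ((n : ℝ) - 2) / n < m) (B : ℝ) (hB : 0 < B)
    (τ : ℝ) (hτ : 0 < 1 + 2 * pPar n m * τ) (y : EuclideanSpace ℝ (Fin n)) :
    deriv (fun s => rhoB n m B s y) τ =
      (1 / m) * lap n (fun x => rhoB n m B τ x ^ m) y :=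
  statement16_general n m hm0 hm1 hm B hB τ hτ y
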